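/- If W is a self-dual partial isometry in M_{2N}(ℂ) (W^♯ = W and W W* W = W), then the initial space (ker W)^⊥ has even dimension, and the map v ↦ W* 𝒯 v restricted to the initial space satisfies: v ⊥ W*𝒯v for all v in the initial space, and (W*𝒯)² v = -v. -/

import Mathlib

/-!
Since `𝒯 = -Z ∘ conj`, one computes `𝒯 A = (Aᴴ)^♯ 𝒯` for every matrix `A`, so self-duality of `W`
says `W* 𝒯 = 𝒯 W`. Hence `C = W* 𝒯` maps into the initial space, `C² = -W* W` and
`⟪C x, C y⟫ = ⟪W y, W x⟫ = ⟪y, W* W x⟫`. As `W* W` is the identity on the initial space, `C`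
restricts to an antiunitary map of it with `C² = -1`, i.e. a quaternionic structure.
For such a map `⟪C x, y⟫ = -⟪C y, x⟫`. This gives `⟪C v, v⟫ = 0`, and it makes the Gram matrix `G`
of the bilinear form `(x, y) ↦ ⟪C x, y⟫` skew-symmetric; `G` is invertible because
`⟪C x, C x⟫ = ‖x‖²`, so `det G = (-1)ⁿ det G` forces the dimension `n` to be even.
-/

open Matrix

noncomputable def Zmat (N : ℕ) : Matrix (Fin N ⊕ Fin N) (Fin N ⊕ Fin N) ℂ :=
  Matrix.fromBlocks 0 1 (-1) 0

noncomputable def dual {N : ℕ} (X : Matrix (Fin N ⊕ Fin N) (Fin N ⊕ Fin N) ℂ) :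
    Matrix (Fin N ⊕ Fin N) (Fin N ⊕ Fin N) ℂ :=
  -(Zmat N) * Xᵀ * (Zmat N)

noncomputable def Tmap {N : ℕ} (ξ : Fin N ⊕ Fin N → ℂ) : Fin N ⊕ Fin N → ℂ :=
  Sum.elim (fun i => -(starRingEnd ℂ) (ξ (Sum.inr i))) (fun i => (starRingEnd ℂ) (ξ (Sum.inl i)))

noncomputable def mulVecE {N : ℕ} (Y : Matrix (Fin N ⊕ Fin N) (Fin N ⊕ Fin N) ℂ)
    (v : EuclideanSpace ℂ (Fin N ⊕ Fin N)) : EuclideanSpace ℂ (Fin N ⊕ Fin N) :=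
  WithLp.toLp 2 (Y.mulVec v)

open Module LinearMap InnerProductSpace

section Adjoint

variable {𝕜 E F : Type*} [RCLike 𝕜] [NormedAddCommGroup E] [InnerProductSpace 𝕜 E]
  [FiniteDimensional 𝕜 E] [NormedAddCommGroup F] [InnerProductSpace 𝕜 F] [FiniteDimensional 𝕜 F]

theorem LinearMap.adjoint_apply_mem_orthogonal_ker (T : E →ₗ[𝕜] F) (w : F) :
    T.adjoint w ∈ (ker T)ᗮ := by
  rw [T.orthogonal_ker]
  exact mem_range_self _ _

theorem LinearMap.adjoint_apply_apply_of_mem_orthogonal_ker {T : E →ₗ[𝕜] F}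
    (hT : ∀ v, T (T.adjoint (T v)) = T v) {v : E} (hv : v ∈ (ker T)ᗮ) :
    T.adjoint (T v) = v := by
  have hker : v - T.adjoint (T v) ∈ ker T := by simp [hT]
  have horth : v - T.adjoint (T v) ∈ (ker T)ᗮ :=
    sub_mem hv (T.adjoint_apply_mem_orthogonal_ker _)
  have := Submodule.disjoint_def.mp (Submodule.orthogonal_disjoint _) _ hker horth
  exact (sub_eq_zero.mp this).symm

end Adjoint

theorem Matrix.even_card_of_transpose_eq_neg {n R : Type*} [Fintype n] [DecidableEq n]
    [CommRing R] [IsDomain R] [NeZero (2 : R)] {A : Matrix n n R}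
    (hA : Aᵀ = -A) (hdet : A.det ≠ 0) : Even (Fintype.card n) := by
  have h : A.det = (-1) ^ Fintype.card n * A.det := by
    rw [← det_neg, ← hA, det_transpose]
  have hne : (-1 : R) ≠ 1 := fun h1 => NeZero.ne (2 : R) (by linear_combination -h1)
  rw [← neg_one_pow_eq_one_iff_even hne]
  exact (mul_eq_right₀ hdet).mp h.symm

structure IsQuaternionicStructure {E : Type*} [NormedAddCommGroup E] [InnerProductSpace ℂ E]
    (C : E → E) : Prop where
  map_map : ∀ x, C (C x) = -x
  inner_map_map : ∀ x y, ⟪C x, C y⟫_ℂ = ⟪y, x⟫_ℂ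

namespace IsQuaternionicStructure

variable {E : Type*} [NormedAddCommGroup E] [InnerProductSpace ℂ E] {C : E → E}

theorem inner_map_left (hC : IsQuaternionicStructure C) (x y : E) :
    ⟪C x, y⟫_ℂ = -⟪C y, x⟫_ℂ := by
  have h : ⟪y, C x⟫_ℂ = -⟪x, C y⟫_ℂ := by
    rw [← hC.inner_map_map (C y) x, hC.map_map, inner_neg_left, neg_neg]
  rw [← inner_conj_symm, h, map_neg, inner_conj_symm]

theorem inner_map_self (hC : IsQuaternionicStructure C) (x : E) : ⟪C x, x⟫_ℂ = 0 :=
  self_eq_neg.mp (hC.inner_map_left x x)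

theorem even_finrank [FiniteDimensional ℂ E] (hC : IsQuaternionicStructure C) :
    Even (finrank ℂ E) := by
  let b := finBasis ℂ E
  let G : Matrix (Fin (finrank ℂ E)) (Fin (finrank ℂ E)) ℂ := .of fun i j => ⟪C (b i), b j⟫_ℂ
  have hskew : Gᵀ = -G := by
    ext i j
    exact hC.inner_map_left (b j) (b i)
  have hdet : G.det ≠ 0 := by
    rw [Ne, ← exists_mulVec_eq_zero_iff]
    rintro ⟨c, hc0, hc⟩
    have hCy : C (b.equivFun.symm c) = 0 := by
      refine ext_inner_left_basis b fun i => ?_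
      have hi : ⟪C (b i), b.equivFun.symm c⟫_ℂ = 0 := by
        simpa [Basis.equivFun_symm_apply, inner_sum, inner_smul_right, G, Matrix.mulVec,
          dotProduct, mul_comm] using congrFun hc i
      rw [inner_zero_right, inner_eq_zero_symm, hC.inner_map_left, hi, neg_zero]
    have hy : b.equivFun.symm c = 0 := by
      rw [← inner_self_eq_zero (𝕜 := ℂ), ← hC.inner_map_map, hCy, inner_zero_left]
    exact hc0 ((LinearEquiv.map_eq_zero_iff _).mp hy)
  simpa using even_card_of_transpose_eq_neg hskew hdet

theorem restrict_adjoint_comp [FiniteDimensional ℂ E] {T : E →ₗ[ℂ] E} {J : E → E}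
    (hJ : IsQuaternionicStructure J) (hT : ∀ v, T (T.adjoint (T v)) = T v)
    (hTJ : ∀ v, T.adjoint (J v) = J (T v)) :
    IsQuaternionicStructure fun v : (ker T)ᗮ =>
      (⟨T.adjoint (J v), T.adjoint_apply_mem_orthogonal_ker _⟩ : (ker T)ᗮ) where
  map_map v := by
    ext
    simp only [hTJ, hJ.map_map, map_neg, T.adjoint_apply_apply_of_mem_orthogonal_ker hT v.2,
      Submodule.coe_neg]
  inner_map_map x y := by
    simp only [Submodule.coe_inner, hTJ, hJ.inner_map_map, ← adjoint_inner_right,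
      T.adjoint_apply_apply_of_mem_orthogonal_ker hT x.2]

end IsQuaternionicStructure

section Tmap

variable {N : ℕ}

theorem Zmat_mul_self : Zmat N * Zmat N = -1 := by
  simp [Zmat, fromBlocks_multiply, ← fromBlocks_one, fromBlocks_neg]

theorem Zmat_conjTranspose : (Zmat N)ᴴ = -Zmat N := by
  simp [Zmat, fromBlocks_conjTranspose, fromBlocks_neg]

theorem dual_conjTranspose (A : Matrix (Fin N ⊕ Fin N) (Fin N ⊕ Fin N) ℂ) :
    dual Aᴴ = (dual A)ᴴ := by
  simp [dual, conjTranspose_mul, Zmat_conjTranspose, mul_assoc,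
    conjTranspose_transpose_eq_transpose_conjTranspose]

theorem Tmap_eq_neg_Zmat_mulVec_star (v : Fin N ⊕ Fin N → ℂ) :
    Tmap v = -(Zmat N *ᵥ star v) := by
  ext (i | i) <;> simp [Tmap, Zmat, fromBlocks_mulVec, neg_mulVec]

theorem Tmap_mulVec (A : Matrix (Fin N ⊕ Fin N) (Fin N ⊕ Fin N) ℂ) (v : Fin N ⊕ Fin N → ℂ) :
    Tmap (A *ᵥ v) = dual Aᴴ *ᵥ Tmap v := by
  have h : -Zmat N * Aᴴᵀ * Zmat N * Zmat N = Zmat N * Aᴴᵀ := by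
    rw [mul_assoc _ (Zmat N), Zmat_mul_self]
    noncomm_ring
  rw [Tmap_eq_neg_Zmat_mulVec_star, Tmap_eq_neg_Zmat_mulVec_star, star_mulVec,
    ← mulVec_transpose, dual, mulVec_neg, mulVec_mulVec, mulVec_mulVec, h]

theorem Tmap_Tmap (v : Fin N ⊕ Fin N → ℂ) : Tmap (Tmap v) = -v := by
  ext (i | i) <;> simp [Tmap]

theorem inner_Tmap_Tmap (x y : EuclideanSpace ℂ (Fin N ⊕ Fin N)) :
    ⟪WithLp.toLp 2 (Tmap x), WithLp.toLp 2 (Tmap y)⟫_ℂ = ⟪y, x⟫_ℂ := by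
  simp [PiLp.inner_apply, Fintype.sum_sum_type, Tmap, add_comm, mul_comm]

theorem isQuaternionicStructure_Tmap :
    IsQuaternionicStructure fun v : EuclideanSpace ℂ (Fin N ⊕ Fin N) =>
      WithLp.toLp 2 (Tmap v) where
  map_map v := by simp [Tmap_Tmap]
  inner_map_map := inner_Tmap_Tmap

theorem conjTranspose_mulVec_Tmap {W : Matrix (Fin N ⊕ Fin N) (Fin N ⊕ Fin N) ℂ}
    (hsd : dual W = W) (v : Fin N ⊕ Fin N → ℂ) : Wᴴ *ᵥ Tmap v = Tmap (W *ᵥ v) := by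
  rw [Tmap_mulVec, dual_conjTranspose, hsd]

end Tmap

theorem self_dual_partial_isometry {N : ℕ}
    (W : Matrix (Fin N ⊕ Fin N) (Fin N ⊕ Fin N) ℂ)
    (hsd : dual W = W) (hpi : W * Wᴴ * W = W) :
    Even (Module.finrank ℂ (LinearMap.ker (Matrix.toEuclideanLin W))ᗮ) ∧
    (∀ v ∈ (LinearMap.ker (Matrix.toEuclideanLin W))ᗮ,
      (inner ℂ v (mulVecE Wᴴ (WithLp.toLp 2 (Tmap v))) : ℂ) = 0 ∧
      mulVecE Wᴴ (WithLp.toLp 2 (Tmap (mulVecE Wᴴ (WithLp.toLp 2 (Tmap v))))) = -v) := by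
  set T := toEuclideanLin W
  have hadj : T.adjoint = toEuclideanLin Wᴴ := (toEuclideanLin_conjTranspose_eq_adjoint W).symm
  have hT : ∀ v, T (T.adjoint (T v)) = T v := fun v => by
    rw [hadj]
    change WithLp.toLp 2 (W *ᵥ (Wᴴ *ᵥ (W *ᵥ v.ofLp))) = WithLp.toLp 2 (W *ᵥ v.ofLp)
    rw [mulVec_mulVec, mulVec_mulVec, hpi]
  have hTJ : ∀ v : EuclideanSpace ℂ (Fin N ⊕ Fin N),
      T.adjoint (WithLp.toLp 2 (Tmap v)) = WithLp.toLp 2 (Tmap (T v)) := fun v => by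
    rw [hadj]
    exact congrArg (WithLp.toLp 2) (conjTranspose_mulVec_Tmap hsd v)
  have hC := isQuaternionicStructure_Tmap.restrict_adjoint_comp hT hTJ
  simp only [hadj] at hC
  refine ⟨hC.even_finrank, fun v hv => ⟨?_, congrArg Subtype.val (hC.map_map ⟨v, hv⟩)⟩⟩
  exact inner_eq_zero_symm.mp (hC.inner_map_self ⟨v, hv⟩)
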